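/- Consider a discrete cycle through configurations c₁ = (ρ₁, H₁) thermal at β₁, c₃ = (Vρ₁V†, H₂), c₂ = (ρ₂, H₂) thermal at β₂, c₄ = (Wρ₂W†, H₁), returning to c₁ via a DTT, with unitaries V, W. Then the heats Q₂ := tr[(ρ₂ − Vρ₁V†)H₂] and Q₁ := tr[(ρ₁ − Wρ₂W†)H₁] satisfy β₂Q₂ + β₁Q₁ ≤ 0. -/

import Mathlib

open Matrix BigOperators ComplexOrder

/-- Apply a real function to a Hermitian matrix via the spectral theorem
(junk value `0` for non-Hermitian input). -/
noncomputable def matFun {n : Type*} [Fintype n] [DecidableEq n]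
    (f : ℝ → ℝ) (A : Matrix n n ℂ) : Matrix n n ℂ :=
  if hA : A.IsHermitian then
    (hA.eigenvectorUnitary : Matrix n n ℂ) *
      Matrix.diagonal (fun i => (f (hA.eigenvalues i) : ℂ)) *
      star (hA.eigenvectorUnitary : Matrix n n ℂ)
  else 0

/-- Matrix logarithm of a Hermitian matrix. -/
noncomputable def matLog {n : Type*} [Fintype n] [DecidableEq n]
    (A : Matrix n n ℂ) : Matrix n n ℂ := matFun Real.log A

/-- Matrix exponential of a Hermitian matrix. -/
noncomputable def matExp {n : Type*} [Fintype n] [DecidableEq n]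
    (A : Matrix n n ℂ) : Matrix n n ℂ := matFun Real.exp A

/-- The Gibbs state `e^{-βH}/tr[e^{-βH}]`. -/
noncomputable def gibbs {n : Type*} [Fintype n] [DecidableEq n]
    (β : ℝ) (H : Matrix n n ℂ) : Matrix n n ℂ :=
  (matExp ((-β) • H)).trace⁻¹ • matExp ((-β) • H)

/-- A density matrix: positive semidefinite with unit trace. -/
def IsDensity {n : Type*} [Fintype n] [DecidableEq n] (ρ : Matrix n n ℂ) : Prop :=
  ρ.PosSemidef ∧ ρ.trace = 1

/-- von Neumann entropy `S(ρ) = -tr[ρ ln ρ]`. -/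
noncomputable def vnEntropy {n : Type*} [Fintype n] [DecidableEq n]
    (ρ : Matrix n n ℂ) : ℝ := -((ρ * matLog ρ).trace.re)

/-- Relative entropy `S(ρ‖σ) = tr[ρ ln ρ] - tr[ρ ln σ]`. -/
noncomputable def relEnt {n : Type*} [Fintype n] [DecidableEq n]
    (ρ σ : Matrix n n ℂ) : ℝ :=
  ((ρ * matLog ρ).trace - (ρ * matLog σ).trace).re

/-!
For a Gibbs state `ρ` one has `log ρ = -βH - log Z`, so for any density matrix `σ` the heat
`β tr[(ρ - σ)H]` equals `S(ρ) - S(σ) - S(σ‖ρ)`, and Klein's inequality `S(σ‖ρ) ≥ 0` gives the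
Clausius inequality `βQ ≤ ΔS` for each thermalisation leg. The unitary strokes preserve the
entropy, so the entropy changes of the two legs cancel around the cycle.

Klein's inequality reduces to the scalar inequality `p log p - p log q ≥ p - q` after expanding
`σ` and `ρ` in their eigenbases: the overlaps `|⟨uᵢ, vⱼ⟩|²` of two orthonormal bases form a
doubly stochastic matrix.
-/

open scoped MatrixOrder
open Unitary

section

variable {n : Type*} [Fintype n] [DecidableEq n]

theorem matFun_eq_cfc (f : ℝ → ℝ) {A : Matrix n n ℂ} (hA : A.IsHermitian) :
    matFun f A = cfc f A := by
  rw [hA.cfc_eq, IsHermitian.cfc, conjStarAlgAut_apply, matFun, dif_pos hA]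
  rfl

theorem Matrix.IsHermitian.trace_cfc {A : Matrix n n ℂ} (hA : A.IsHermitian) (f : ℝ → ℝ) :
    (cfc f A).trace = ∑ i, (f (hA.eigenvalues i) : ℂ) := by
  rw [hA.cfc_eq, IsHermitian.cfc, conjStarAlgAut_apply, trace_mul_cycle,
    star_mul_self_of_mem hA.eigenvectorUnitary.2, one_mul, trace_diagonal]
  rfl

theorem trace_diagonal_mul_mul_diagonal_mul_star (a b : n → ℝ) (M : Matrix n n ℂ) :
    (diagonal (fun i => (a i : ℂ)) * M * diagonal (fun j => (b j : ℂ)) * star M).trace =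
      ∑ i, ∑ j, ((Complex.normSq (M i j) * (a i * b j) : ℝ) : ℂ) := by
  simp only [trace, diag_apply, mul_apply, diagonal_apply, star_apply, ite_mul, zero_mul,
    Finset.sum_ite_eq, Finset.mem_univ, ↓reduceIte, mul_ite, mul_zero, Finset.sum_ite_eq',
    RCLike.star_def, Complex.ofReal_mul, Complex.normSq_eq_conj_mul_self]
  exact Finset.sum_congr rfl fun i _ => Finset.sum_congr rfl fun j _ => by ring

theorem Matrix.IsHermitian.re_trace_cfc_mul_cfc {A B : Matrix n n ℂ} (hA : A.IsHermitian)
    (hB : B.IsHermitian) (f g : ℝ → ℝ) :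
    (cfc f A * cfc g B).trace.re = ∑ i, ∑ j,
      Complex.normSq ((star (hA.eigenvectorUnitary : Matrix n n ℂ) * hB.eigenvectorUnitary) i j) *
        (f (hA.eigenvalues i) * g (hB.eigenvalues j)) := by
  have hU := hA.eigenvectorUnitary.2
  have hprod : cfc f A * cfc g B = hA.eigenvectorUnitary *
      (diagonal (fun i => (f (hA.eigenvalues i) : ℂ)) *
        (star (hA.eigenvectorUnitary : Matrix n n ℂ) * hB.eigenvectorUnitary) *
        diagonal (fun j => (g (hB.eigenvalues j) : ℂ)) *
        star (star (hA.eigenvectorUnitary : Matrix n n ℂ) * hB.eigenvectorUnitary)) *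
      star (hA.eigenvectorUnitary : Matrix n n ℂ) := by
    simp only [hA.cfc_eq, hB.cfc_eq, IsHermitian.cfc, conjStarAlgAut_apply, star_mul, star_star,
      Matrix.mul_assoc, mul_star_self_of_mem hU, mul_one, Function.comp_def]
    rfl
  rw [hprod, trace_mul_cycle, star_mul_self_of_mem hU, one_mul,
    trace_diagonal_mul_mul_diagonal_mul_star]
  simp only [Complex.re_sum, Complex.ofReal_re]

theorem normSq_mem_doublyStochastic (U : unitaryGroup n ℂ) :
    of (fun i j => Complex.normSq ((U : Matrix n n ℂ) i j)) ∈ doublyStochastic ℝ n := by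
  rw [mem_doublyStochastic_iff_sum]
  refine ⟨fun i j => Complex.normSq_nonneg _, fun i => ?_, fun j => ?_⟩
  · have h : ((U : Matrix n n ℂ) * star (U : Matrix n n ℂ)) i i = 1 := by
      rw [mul_star_self_of_mem U.2, one_apply_eq]
    simp only [mul_apply, star_apply, Complex.star_def, Complex.mul_conj] at h
    exact_mod_cast h
  · have h : (star (U : Matrix n n ℂ) * (U : Matrix n n ℂ)) j j = 1 := by
      rw [star_mul_self_of_mem U.2, one_apply_eq]
    simp only [mul_apply, star_apply, Complex.star_def, ← Complex.normSq_eq_conj_mul_self] at h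
    exact_mod_cast h

theorem Real.sub_le_mul_log_sub_mul_log {p q : ℝ} (hp : 0 ≤ p) (hq : 0 < q) :
    p - q ≤ p * Real.log p - p * Real.log q := by
  rcases hp.eq_or_lt with rfl | hp
  · simpa using hq.le
  have h := Real.one_sub_inv_le_log_of_pos (div_pos hp hq)
  rw [Real.log_div hp.ne' hq.ne', inv_div] at h
  calc p - q = p * (1 - q / p) := by field_simp
    _ ≤ p * (Real.log p - Real.log q) := mul_le_mul_of_nonneg_left h hp.le
    _ = p * Real.log p - p * Real.log q := mul_sub _ _ _

theorem sum_sub_sum_le_of_mem_doublyStochastic {w : Matrix n n ℝ} (hw : w ∈ doublyStochastic ℝ n)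
    {p q : n → ℝ} (hp : ∀ i, 0 ≤ p i) (hq : ∀ j, 0 < q j) :
    ∑ i, p i - ∑ j, q j ≤ ∑ i, p i * Real.log (p i) - ∑ i, ∑ j, w i j * (p i * Real.log (q j)) := by
  obtain ⟨hw0, hrow, hcol⟩ := mem_doublyStochastic_iff_sum.mp hw
  have row_sum (c : n → ℝ) : ∑ i, ∑ j, w i j * c i = ∑ i, c i := by
    simp only [← Finset.sum_mul, hrow, one_mul]
  have col_sum (c : n → ℝ) : ∑ i, ∑ j, w i j * c j = ∑ j, c j := by
    rw [Finset.sum_comm]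
    simp only [← Finset.sum_mul, hcol, one_mul]
  calc ∑ i, p i - ∑ j, q j = ∑ i, ∑ j, w i j * (p i - q j) := by
        simp only [mul_sub, Finset.sum_sub_distrib, row_sum, col_sum]
    _ ≤ ∑ i, ∑ j, w i j * (p i * Real.log (p i) - p i * Real.log (q j)) :=
        Finset.sum_le_sum fun i _ => Finset.sum_le_sum fun j _ =>
          mul_le_mul_of_nonneg_left (Real.sub_le_mul_log_sub_mul_log (hp i) (hq j)) (hw0 i j)
    _ = ∑ i, p i * Real.log (p i) - ∑ i, ∑ j, w i j * (p i * Real.log (q j)) := by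
        simp only [mul_sub, Finset.sum_sub_distrib, row_sum (fun i => p i * Real.log (p i))]

theorem re_trace_sub_le_relEnt {σ ρ : Matrix n n ℂ} (hσ : σ.PosSemidef) (hρ : ρ.PosDef) :
    (σ.trace - ρ.trace).re ≤ relEnt σ ρ := by
  have hσH := hσ.isHermitian
  have hρH := hρ.isHermitian
  have hσ_cfc : σ = cfc id σ := (cfc_id' ℝ σ hσH.isSelfAdjoint).symm
  have hw := normSq_mem_doublyStochastic
    (star hσH.eigenvectorUnitary * hρH.eigenvectorUnitary : unitaryGroup n ℂ)
  have h_scalar :=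
    sum_sub_sum_le_of_mem_doublyStochastic hw hσ.eigenvalues_nonneg hρ.eigenvalues_pos
  have h_entropy :
      (σ * matLog σ).trace.re = ∑ i, hσH.eigenvalues i * Real.log (hσH.eigenvalues i) := by
    have hmul : σ * cfc Real.log σ = cfc (fun x => x * Real.log x) σ := by
      rw [cfc_mul (fun x => x) Real.log σ (by fun_prop) (σ.finite_real_spectrum.continuousOn _),
        cfc_id' ℝ σ]
    rw [matLog, matFun_eq_cfc _ hσH, hmul, hσH.trace_cfc]
    simp only [Complex.re_sum, Complex.ofReal_re]
  have h_cross : (σ * matLog ρ).trace.re = ∑ i, ∑ j,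
      Complex.normSq ((star (hσH.eigenvectorUnitary : Matrix n n ℂ) * hρH.eigenvectorUnitary) i j) *
        (hσH.eigenvalues i * Real.log (hρH.eigenvalues j)) := by
    rw [matLog, matFun_eq_cfc _ hρH]
    conv_lhs => rw [hσ_cfc]
    exact hσH.re_trace_cfc_mul_cfc hρH id Real.log
  rw [relEnt, Complex.sub_re, Complex.sub_re, h_entropy, h_cross, hσH.trace_eq_sum_eigenvalues,
    hρH.trace_eq_sum_eigenvalues]
  simpa only [Complex.re_sum, Complex.coe_algebraMap, Complex.ofReal_re, of_apply,
    Submonoid.coe_mul, Unitary.coe_star] using h_scalar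

theorem trace_matExp {A : Matrix n n ℂ} (hA : A.IsHermitian) :
    (matExp A).trace = ((∑ i, Real.exp (hA.eigenvalues i) : ℝ) : ℂ) := by
  rw [matExp, matFun_eq_cfc _ hA, hA.trace_cfc, Complex.ofReal_sum]

section Gibbs

variable [Nonempty n] (β : ℝ) {H : Matrix n n ℂ} (hH : H.IsHermitian)
include hH

theorem exists_gibbs_eq_cfc :
    ∃ Z : ℝ, 0 < Z ∧ gibbs β H = cfc (fun x => Z⁻¹ * Real.exp x) ((-β) • H) := by
  have hB : ((-β) • H).IsHermitian := hH.smul (IsSelfAdjoint.all _)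
  refine ⟨_, Finset.sum_pos (fun i _ => Real.exp_pos (hB.eigenvalues i)) Finset.univ_nonempty, ?_⟩
  rw [gibbs, trace_matExp hB, cfc_const_mul _ _ _ (by fun_prop), matExp, matFun_eq_cfc _ hB,
    ← Complex.ofReal_inv, Complex.coe_smul]

theorem gibbs_posDef : (gibbs β H).PosDef := by
  obtain ⟨Z, hZ, hgibbs⟩ := exists_gibbs_eq_cfc β hH
  rw [hgibbs, ← isStrictlyPositive_iff_posDef, cfc_isStrictlyPositive_iff _ _ (by fun_prop)
    (hH.smul (IsSelfAdjoint.all _)).isSelfAdjoint]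
  exact fun x _ => mul_pos (inv_pos.mpr hZ) (Real.exp_pos x)

theorem trace_gibbs : (gibbs β H).trace = 1 := by
  have hB : ((-β) • H).IsHermitian := hH.smul (IsSelfAdjoint.all _)
  have hZ : 0 < ∑ i, Real.exp (hB.eigenvalues i) :=
    Finset.sum_pos (fun i _ => Real.exp_pos _) Finset.univ_nonempty
  rw [gibbs, trace_smul, trace_matExp hB, smul_eq_mul, inv_mul_cancel₀]
  exact_mod_cast hZ.ne'

theorem exists_matLog_gibbs : ∃ c : ℝ, matLog (gibbs β H) = (-β) • H - c • 1 := by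
  obtain ⟨Z, hZ, hgibbs⟩ := exists_gibbs_eq_cfc β hH
  have hB : IsSelfAdjoint ((-β) • H) := (hH.smul (IsSelfAdjoint.all _)).isSelfAdjoint
  refine ⟨Real.log Z, ?_⟩
  have hlog (x : ℝ) : Real.log (Z⁻¹ * Real.exp x) = x - Real.log Z := by
    rw [Real.log_mul (inv_ne_zero hZ.ne') (Real.exp_ne_zero x), Real.log_inv, Real.log_exp]; ring
  rw [matLog, matFun_eq_cfc _ (hgibbs ▸ (cfc_predicate _ _ : IsSelfAdjoint _)), hgibbs,
    ← cfc_comp Real.log (fun x => Z⁻¹ * Real.exp x) _ hB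
      ((((-β) • H).finite_real_spectrum.image _).continuousOn _)]
  simp only [Function.comp_def, hlog]
  rw [cfc_sub _ _ _ (by fun_prop) (by fun_prop), cfc_id' ℝ _ hB, cfc_const _ _ hB,
    Algebra.algebraMap_eq_smul_one]

end Gibbs

theorem isDensity_gibbs [Nonempty n] (β : ℝ) {H : Matrix n n ℂ} (hH : H.IsHermitian) :
    IsDensity (gibbs β H) :=
  ⟨(gibbs_posDef β hH).posSemidef, trace_gibbs β hH⟩

section UnitaryConj

variable (U : unitaryGroup n ℂ)

theorem trace_unitary_conj (A : Matrix n n ℂ) :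
    ((U : Matrix n n ℂ) * A * star (U : Matrix n n ℂ)).trace = A.trace := by
  rw [trace_mul_cycle, star_mul_self_of_mem U.2, one_mul]

theorem IsDensity.unitary_conj {ρ : Matrix n n ℂ} (hρ : IsDensity ρ) :
    IsDensity ((U : Matrix n n ℂ) * ρ * star (U : Matrix n n ℂ)) :=
  ⟨hρ.1.mul_mul_conjTranspose_same _, (trace_unitary_conj U ρ).trans hρ.2⟩

theorem matLog_unitary_conj {ρ : Matrix n n ℂ} (hρ : ρ.IsHermitian) :
    matLog ((U : Matrix n n ℂ) * ρ * star (U : Matrix n n ℂ)) =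
      U * matLog ρ * star (U : Matrix n n ℂ) := by
  have hφ : Continuous (conjStarAlgAut ℂ (Matrix n n ℂ) U) := by
    have : ⇑(conjStarAlgAut ℂ (Matrix n n ℂ) U) = fun x => U * x * star (U : Matrix n n ℂ) :=
      funext (conjStarAlgAut_apply U)
    rw [this]
    fun_prop
  have hconj := hρ.isSelfAdjoint.conjugate (U : Matrix n n ℂ)
  rw [matLog, matLog, matFun_eq_cfc _ hconj, matFun_eq_cfc _ hρ, ← conjStarAlgAut_apply (S := ℂ),
    ← conjStarAlgAut_apply (S := ℂ), StarAlgHomClass.map_cfc (conjStarAlgAut ℂ _ U) Real.log ρ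
      (ρ.finite_real_spectrum.continuousOn _) hφ hρ.isSelfAdjoint]

theorem vnEntropy_unitary_conj {ρ : Matrix n n ℂ} (hρ : ρ.IsHermitian) :
    vnEntropy ((U : Matrix n n ℂ) * ρ * star (U : Matrix n n ℂ)) = vnEntropy ρ := by
  rw [vnEntropy, vnEntropy, matLog_unitary_conj U hρ, ← conjStarAlgAut_apply (S := ℂ),
    ← conjStarAlgAut_apply (S := ℂ), ← map_mul, conjStarAlgAut_apply, trace_unitary_conj]

end UnitaryConj

theorem clausius_inequality (β : ℝ) {H σ : Matrix n n ℂ} (hH : H.IsHermitian) (hσ : IsDensity σ) :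
    β * ((gibbs β H - σ) * H).trace.re ≤ vnEntropy (gibbs β H) - vnEntropy σ := by
  cases isEmpty_or_nonempty n
  · simpa [trace_eq_zero_of_isEmpty] using hσ.2
  obtain ⟨c, hc⟩ := exists_matLog_gibbs β hH
  have hlog (X : Matrix n n ℂ) :
      (X * matLog (gibbs β H)).trace.re = -β * (X * H).trace.re - c * X.trace.re := by
    rw [hc, Matrix.mul_sub, mul_smul_comm, mul_smul_comm, Matrix.mul_one, trace_sub, trace_smul,
      trace_smul]
    simp
  have klein := re_trace_sub_le_relEnt hσ.1 (gibbs_posDef β hH)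
  rw [relEnt, Complex.sub_re, Complex.sub_re, hlog, hσ.2, trace_gibbs β hH, sub_self] at klein
  rw [vnEntropy, vnEntropy, hlog, trace_gibbs β hH, Matrix.sub_mul, trace_sub, Complex.sub_re]
  simp only [Complex.one_re] at klein ⊢
  linarith

end

theorem cycle_loop_inequality_general {n : Type*} [Fintype n] [DecidableEq n]
    (H₁ H₂ : Matrix n n ℂ) (hH₁ : H₁.IsHermitian) (hH₂ : H₂.IsHermitian)
    (β₁ β₂ : ℝ)
    (ρ₁ ρ₂ : Matrix n n ℂ) (hρ₁ : ρ₁ = gibbs β₁ H₁) (hρ₂ : ρ₂ = gibbs β₂ H₂)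
    (V W : Matrix.unitaryGroup n ℂ) :
    β₂ * (((ρ₂ - (V : Matrix n n ℂ) * ρ₁ * star (V : Matrix n n ℂ)) * H₂).trace.re) +
      β₁ * (((ρ₁ - (W : Matrix n n ℂ) * ρ₂ * star (W : Matrix n n ℂ)) * H₁).trace.re) ≤ 0 := by
  rcases isEmpty_or_nonempty n with hn | hn
  · simp [trace_eq_zero_of_isEmpty]
  subst hρ₁ hρ₂
  have h₁ := isDensity_gibbs β₁ hH₁
  have h₂ := isDensity_gibbs β₂ hH₂
  have leg₂ := clausius_inequality β₂ hH₂ (h₁.unitary_conj V)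
  have leg₁ := clausius_inequality β₁ hH₁ (h₂.unitary_conj W)
  rw [vnEntropy_unitary_conj V h₁.1.isHermitian] at leg₂
  rw [vnEntropy_unitary_conj W h₂.1.isHermitian] at leg₁
  linarith

/-- loop inequality for the discrete cycle: β₂Q₂ + β₁Q₁ ≤ 0. -/
theorem cycle_loop_inequality {n : Type*} [Fintype n] [DecidableEq n]
    (H₁ H₂ : Matrix n n ℂ) (hH₁ : H₁.IsHermitian) (hH₂ : H₂.IsHermitian)
    (β₁ β₂ : ℝ) (hβ₁ : 0 < β₁) (hβ₂ : 0 < β₂)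
    (ρ₁ ρ₂ : Matrix n n ℂ) (hρ₁ : ρ₁ = gibbs β₁ H₁) (hρ₂ : ρ₂ = gibbs β₂ H₂)
    (V W : Matrix.unitaryGroup n ℂ) :
    β₂ * (((ρ₂ - (V : Matrix n n ℂ) * ρ₁ * star (V : Matrix n n ℂ)) * H₂).trace.re) +
      β₁ * (((ρ₁ - (W : Matrix n n ℂ) * ρ₂ * star (W : Matrix n n ℂ)) * H₁).trace.re) ≤ 0 :=
  cycle_loop_inequality_general H₁ H₂ hH₁ hH₂ β₁ β₂ ρ₁ ρ₂ hρ₁ hρ₂ V W
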